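/- Let L, M, N ⊆ [m] with N a proper subset of [m] and with L, M, N not all empty, and let C = C(Δ_L, Δ_M, Δ_N^c). Then C is a binary linear code of length (2^m − 2^{|N|})·2^{|L|+|M|}, dimension m + |L| + |M|, and minimum distance (2^m − 2^{|N|})·2^{|L|+|M|−1}; its weight enumerator equals 1 + (2^{m+|L|+|M|} − 2^{m−|N|})·X^{(2^m − 2^{|N|})·2^{|L|+|M|−1}} + (2^{m−|N|} − 1)·X^{2^{m+|L|+|M|−1}}; and C is a Griesmer code, i.e., Σ_{i=0}^{k−1} ⌈d/2^i⌉ = n for these n, k, d. -/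

import Mathlib

/-!
With the sign character `ψ a = (-1)^a` of `F₂`, a binary word `c` of length `n` has weight
`(n - ∑ d, ψ (c d)) / 2`. For `c = c(α, β, γ)` the character sum factors over `D₁ × D₂ × D₃`, and
`∑ d ∈ Δ_S, ψ (x·d)` is `2^|S|` if `x` vanishes on `S` and `0` otherwise; the sum over `Δ_Nᶜ` is the
sum over `F₂^m` minus the one over `Δ_N`. Hence every codeword has weight `0`, `n / 2` or
`2^(m+|L|+|M|-1)`, the last exactly for the words `c(0, β, β)` with `β ≠ 0` vanishing on `N`.
Counting these, together with the kernel `{α|_L = 0, β = 0, γ|_M = 0}`, gives the dimension and the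
weight distribution. Finally `d = 2^s (2^t - 1)` with `s + 1 = |N| + |L| + |M|` and `t = m - |N|`:
in the Griesmer sum the first `s + 1` quotients `d / 2^i` are integers and the last `t` round up to
powers of two.
-/

open Finset Polynomial
open scoped Classical

/-- `V m` is the vector space `F₂^m`. -/
abbrev V (m : ℕ) := Fin m → ZMod 2

/-- Dot product `x·y = Σ_i x_i y_i` in `F₂`. -/
def dot {m : ℕ} (x y : V m) : ZMod 2 := ∑ i, x i * y i

/-- `Supp v = {i : v i ≠ 0}`. -/
def supp {m : ℕ} (v : V m) : Finset (Fin m) := Finset.univ.filter fun i => v i ≠ 0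

/-- The simplicial complex `Δ_L = {v : Supp v ⊆ L}` generated by `L`. -/
def Δ {m : ℕ} (L : Finset (Fin m)) : Finset (V m) := Finset.univ.filter fun v => supp v ⊆ L

/-- Hamming weight of a vector. -/
def wtv {ι : Type} [Fintype ι] (c : ι → ZMod 2) : ℕ :=
  (Finset.univ.filter fun i => c i ≠ 0).card

/-- The linear functional `x ↦ x·y`. -/
noncomputable def dotL {m : ℕ} (y : V m) : V m →ₗ[ZMod 2] ZMod 2 :=
  ∑ i, LinearMap.smulRight (LinearMap.proj i) (y i)

/-- The linear map `(α,β,γ) ↦ ((d₁,d₂,d₃) ↦ α·d₁ + (β+γ)·d₂ + β·d₃)` whose range is the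
binary code `C(D₁,D₂,D₃)`. -/
noncomputable def codeMap {m : ℕ} (D₁ D₂ D₃ : Finset (V m)) :
    (V m × V m × V m) →ₗ[ZMod 2]
      (({x // x ∈ D₁} × {x // x ∈ D₂} × {x // x ∈ D₃}) → ZMod 2) :=
  LinearMap.pi fun d =>
    (dotL d.1.1).comp (LinearMap.fst (ZMod 2) (V m) (V m × V m))
    + (dotL d.2.1.1).comp
        (((LinearMap.fst (ZMod 2) (V m) (V m)).comp (LinearMap.snd (ZMod 2) (V m) (V m × V m)))
          + ((LinearMap.snd (ZMod 2) (V m) (V m)).comp (LinearMap.snd (ZMod 2) (V m) (V m × V m))))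
    + (dotL d.2.2.1).comp
        ((LinearMap.fst (ZMod 2) (V m) (V m)).comp (LinearMap.snd (ZMod 2) (V m) (V m × V m)))

lemma codeMap_apply {m : ℕ} (D₁ D₂ D₃ : Finset (V m)) (α β γ : V m)
    (d : {x // x ∈ D₁} × {x // x ∈ D₂} × {x // x ∈ D₃}) :
    codeMap D₁ D₂ D₃ (α, β, γ) d = dot α d.1.1 + dot (β + γ) d.2.1.1 + dot β d.2.2.1 := by
  simp [codeMap, dotL, dot, LinearMap.smulRight, mul_comm]

lemma AddChar.map_sum_eq_prod {ι A M : Type*} [AddCommMonoid A] [CommMonoid M]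
    (ψ : AddChar A M) (s : Finset ι) (f : ι → A) : ψ (∑ i ∈ s, f i) = ∏ i ∈ s, ψ (f i) :=
  map_prod ψ.toMonoidHom (fun i => Multiplicative.ofAdd (f i)) s

def signChar : AddChar (ZMod 2) ℤ where
  toFun a := 1 - 2 * a.val
  map_zero_eq_one' := rfl
  map_add_eq_mul' := by decide

lemma sum_signChar_mul (a : ZMod 2) : ∑ b, signChar (a * b) = if a = 0 then 2 else 0 := by
  revert a; decide

lemma one_sub_signChar (a : ZMod 2) : 1 - signChar a = 2 * if a ≠ 0 then 1 else 0 := by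
  revert a; decide

lemma two_mul_wtv {ι : Type} [Fintype ι] (c : ι → ZMod 2) :
    2 * (wtv c : ℤ) = Fintype.card ι - ∑ i, signChar (c i) := by
  calc 2 * (wtv c : ℤ) = ∑ i, (1 - signChar (c i)) := by
        simp only [one_sub_signChar, ← mul_sum, wtv, card_filter]
        push_cast
        rfl
    _ = Fintype.card ι - ∑ i, signChar (c i) := by simp [sum_sub_distrib]

lemma mem_Δ {m : ℕ} {S : Finset (Fin m)} {v : V m} : v ∈ Δ S ↔ ∀ i ∉ S, v i = 0 := by
  simp [Δ, supp, subset_iff, not_imp_comm]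

lemma Δ_eq_piFinset {m : ℕ} (S : Finset (Fin m)) :
    Δ S = Fintype.piFinset fun i => if i ∈ S then univ else {0} := by
  ext v
  simp only [mem_Δ, Fintype.mem_piFinset]
  refine forall_congr' fun i => ?_
  split_ifs with hi <;> simp [hi]

theorem sum_Δ_signChar_dot {m : ℕ} (S : Finset (Fin m)) (x : V m) :
    ∑ d ∈ Δ S, signChar (dot x d) = if x ∈ Δ Sᶜ then 2 ^ #S else 0 := by
  have hfactor : ∀ i, ∑ b ∈ (if i ∈ S then univ else {0}), signChar (x i * b)
      = if i ∈ S then (if x i = 0 then 2 else 0) else 1 := by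
    intro i
    by_cases hi : i ∈ S <;> simp [hi, sum_signChar_mul]
  rw [Δ_eq_piFinset]
  simp_rw [dot, AddChar.map_sum_eq_prod]
  rw [← prod_univ_sum (fun i => if i ∈ S then univ else {0})
    (fun i b => signChar (x i * b))]
  simp_rw [hfactor]
  rw [prod_ite_mem, univ_inter, prod_ite_zero, prod_const]
  simp [mem_Δ]

lemma zero_mem_Δ {m : ℕ} (S : Finset (Fin m)) : (0 : V m) ∈ Δ S := mem_Δ.2 fun _ _ => rfl

lemma dot_zero_left {m : ℕ} (y : V m) : dot 0 y = 0 := by simp [dot]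

lemma card_Δ {m : ℕ} (S : Finset (Fin m)) : #(Δ S) = 2 ^ #S := by
  have h := sum_Δ_signChar_dot S 0
  simp only [dot_zero_left, AddChar.map_zero_eq_one, sum_const, nsmul_eq_mul, mul_one,
    if_pos (zero_mem_Δ _)] at h
  exact_mod_cast h

lemma Δ_univ {m : ℕ} : Δ (univ : Finset (Fin m)) = univ := by
  ext v; simp [mem_Δ]

lemma mem_Δ_empty {m : ℕ} {v : V m} : v ∈ Δ ∅ ↔ v = 0 := by
  simp [mem_Δ, funext_iff]

theorem sum_compl_Δ_signChar_dot {m : ℕ} (N : Finset (Fin m)) (x : V m) :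
    ∑ d ∈ (Δ N)ᶜ, signChar (dot x d)
      = (if x = 0 then 2 ^ m else 0) - if x ∈ Δ Nᶜ then 2 ^ #N else 0 := by
  have h := sum_compl_add_sum (Δ N) fun d => signChar (dot x d)
  simp only [← Δ_univ, sum_Δ_signChar_dot, compl_univ, mem_Δ_empty, card_univ,
    Fintype.card_fin] at h
  rw [← h, add_sub_cancel_right]

theorem sum_signChar_codeMap {m : ℕ} (D₁ D₂ D₃ : Finset (V m)) (α β γ : V m) :
    ∑ d, signChar (codeMap D₁ D₂ D₃ (α, β, γ) d)
      = (∑ d ∈ D₁, signChar (dot α d)) * (∑ d ∈ D₂, signChar (dot (β + γ) d))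
          * ∑ d ∈ D₃, signChar (dot β d) := by
  rw [← sum_coe_sort D₁, ← sum_coe_sort D₂, ← sum_coe_sort D₃]
  rw [mul_assoc, Fintype.sum_mul_sum, Fintype.sum_mul_sum]
  simp only [codeMap_apply, AddChar.map_add_eq_mul, Fintype.sum_prod_type, mul_sum,
    mul_assoc]

lemma single_notMem_Δ_compl {m : ℕ} {S : Finset (Fin m)} {i : Fin m} (hi : i ∈ S) :
    (Pi.single i 1 : V m) ∉ Δ Sᶜ := by
  simpa [mem_Δ] using ⟨i, hi, by simp⟩

lemma wtv_eq_zero_iff {ι : Type} [Fintype ι] {c : ι → ZMod 2} : wtv c = 0 ↔ c = 0 :=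
  hammingNorm_eq_zero

lemma sum_pow_of_three_values {ι R : Type*} [CommSemiring R] (s : Finset ι) (g : ι → ℕ) (x : R)
    {a b c : ℕ} (hab : a ≠ b) (hac : a ≠ c) (hbc : b ≠ c)
    (hg : ∀ i ∈ s, g i = a ∨ g i = b ∨ g i = c) :
    ∑ i ∈ s, x ^ g i
      = #{i ∈ s | g i = a} • x ^ a + #{i ∈ s | g i = b} • x ^ b + #{i ∈ s | g i = c} • x ^ c := by
  rw [sum_comp (fun w => x ^ w) g, sum_subset (s₂ := {a, b, c})]
  · rw [sum_insert (by simp [hab, hac]), sum_insert (by simp [hbc]), sum_singleton, add_assoc]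
  · intro w hw
    obtain ⟨i, hi, rfl⟩ := mem_image.1 hw
    simpa using hg i hi
  · intro w _ hw
    rw [card_eq_zero.2 (filter_eq_empty_iff.2 fun i hi hgi => hw (mem_image.2 ⟨i, hi, hgi⟩)),
      zero_smul]

lemma sum_range_two_pow_reflect (n : ℕ) : ∑ i ∈ range n, (2 : ℤ) ^ (n - 1 - i) = 2 ^ n - 1 := by
  rw [sum_range_reflect (fun i => (2 : ℤ) ^ i) n]
  have := geom_sum_mul (2 : ℤ) n
  norm_num at this
  exact this

theorem sum_ceil_div_two_pow (s t : ℕ) :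
    ∑ i ∈ range (s + 1 + t), ⌈(2 ^ s * (2 ^ t - 1) : ℚ) / 2 ^ i⌉ = 2 ^ (s + 1) * (2 ^ t - 1) := by
  have hlow : ∀ i ∈ range (s + 1),
      ⌈(2 ^ s * (2 ^ t - 1) : ℚ) / 2 ^ i⌉ = 2 ^ (s - i) * (2 ^ t - 1) := by
    intro i hi
    have hq : (2 ^ s * (2 ^ t - 1) : ℚ) / 2 ^ i = ((2 ^ (s - i) * (2 ^ t - 1) : ℤ) : ℚ) := by
      rw [div_eq_iff (by positivity)]
      push_cast
      rw [mul_right_comm, ← pow_add, Nat.sub_add_cancel (Nat.lt_succ_iff.1 (mem_range.1 hi))]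
    rw [hq, Int.ceil_intCast]
  have hhigh : ∀ j ∈ range t, ⌈(2 ^ s * (2 ^ t - 1) : ℚ) / 2 ^ (s + 1 + j)⌉ = 2 ^ (t - 1 - j) := by
    intro j hj
    obtain ⟨u, rfl⟩ : ∃ u, t = j + 1 + u := ⟨t - (j + 1), by simp at hj; omega⟩
    have hq : (2 ^ s * (2 ^ (j + 1 + u) - 1) : ℚ) / 2 ^ (s + 1 + j) = 2 ^ u - 1 / 2 ^ (j + 1) := by
      field_simp
      ring
    have hε : (0 : ℚ) < 1 / 2 ^ (j + 1) := by positivity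
    have hε' : (1 : ℚ) / 2 ^ (j + 1) ≤ 1 / 2 := by
      gcongr; exact le_self_pow₀ one_le_two (by omega)
    rw [hq, Int.ceil_eq_iff, show j + 1 + u - 1 - j = u by omega]
    push_cast
    constructor <;> linarith
  have hgeom := sum_range_two_pow_reflect (s + 1)
  rw [Nat.add_sub_cancel] at hgeom
  rw [sum_range_add, sum_congr rfl hlow, sum_congr rfl hhigh, ← sum_mul, hgeom,
    sum_range_two_pow_reflect]
  ring

section Code

variable {m : ℕ} {L M N : Finset (Fin m)}

lemma card_le_dim (S : Finset (Fin m)) : #S ≤ m := by simpa using card_le_univ S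

lemma card_lt_dim (hP : N ⊂ univ) : #N < m := by simpa using card_lt_card hP

lemma two_pow_card_le (S : Finset (Fin m)) : 2 ^ #S ≤ 2 ^ m :=
  Nat.pow_le_pow_right two_pos (card_le_dim S)

lemma card_codeIndex :
    Fintype.card ({x // x ∈ Δ L} × {x // x ∈ Δ M} × {x // x ∈ (Δ N)ᶜ})
      = (2 ^ m - 2 ^ #N) * 2 ^ (#L + #M) := by
  simp only [Fintype.card_prod, Fintype.card_coe, card_Δ, card_compl, Fintype.card_pi,
    ZMod.card, prod_const, card_univ, Fintype.card_fin]
  ring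

lemma card_codeIndex_pos (hP : N ⊂ univ) : 0 < (2 ^ m - 2 ^ #N) * 2 ^ (#L + #M) := by
  exact Nat.mul_pos (Nat.sub_pos_of_lt (Nat.pow_lt_pow_right one_lt_two (card_lt_dim hP)))
    (by positivity)

theorem two_mul_wtv_codeMap (α β γ : V m) :
    2 * (wtv (codeMap (Δ L) (Δ M) (Δ N)ᶜ (α, β, γ)) : ℤ)
      = ((2 : ℤ) ^ m - 2 ^ #N) * 2 ^ (#L + #M)
        - (if α ∈ Δ Lᶜ then 2 ^ #L else 0) * (if β + γ ∈ Δ Mᶜ then 2 ^ #M else 0)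
          * ((if β = 0 then 2 ^ m else 0) - if β ∈ Δ Nᶜ then 2 ^ #N else 0) := by
  rw [two_mul_wtv, sum_signChar_codeMap, sum_Δ_signChar_dot, sum_Δ_signChar_dot,
    sum_compl_Δ_signChar_dot, card_codeIndex]
  push_cast [two_pow_card_le N]
  ring

lemma two_mul_wtv_codeMap_of_notMem {α β γ : V m}
    (h : ¬(α ∈ Δ Lᶜ ∧ β + γ ∈ Δ Mᶜ ∧ β ∈ Δ Nᶜ)) :
    2 * wtv (codeMap (Δ L) (Δ M) (Δ N)ᶜ (α, β, γ)) = (2 ^ m - 2 ^ #N) * 2 ^ (#L + #M) := by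
  have hw := two_mul_wtv_codeMap (L := L) (M := M) (N := N) α β γ
  have hβ : β ∉ Δ Nᶜ → β ≠ 0 := fun hβN hβ => hβN (hβ ▸ zero_mem_Δ _)
  zify [two_pow_card_le N]
  rcases not_and_or.1 h with hα | h
  · simpa [hα] using hw
  rcases not_and_or.1 h with hβγ | hβN
  · simpa [hβγ] using hw
  · simpa [hβN, hβ hβN] using hw

lemma wtv_codeMap_of_mem {α β γ : V m} (hα : α ∈ Δ Lᶜ) (hβγ : β + γ ∈ Δ Mᶜ)
    (hβN : β ∈ Δ Nᶜ) (hβ : β ≠ 0) :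
    wtv (codeMap (Δ L) (Δ M) (Δ N)ᶜ (α, β, γ)) = 2 ^ (m + #L + #M - 1) := by
  have hw := two_mul_wtv_codeMap (L := L) (M := M) (N := N) α β γ
  rw [if_pos hα, if_pos hβγ, if_neg hβ, if_pos hβN] at hw
  obtain ⟨i, -⟩ := Function.ne_iff.1 hβ
  have hpow : (2 : ℤ) ^ (m + #L + #M) = 2 * 2 ^ (m + #L + #M - 1) := by
    rw [← pow_succ']; congr 1; have := i.pos; omega
  have : (2 : ℤ) * wtv (codeMap (Δ L) (Δ M) (Δ N)ᶜ (α, β, γ)) = 2 * 2 ^ (m + #L + #M - 1) := by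
    rw [hw, ← hpow]; ring
  exact_mod_cast mul_left_cancel₀ two_ne_zero this

theorem codeMap_eq_zero_iff (hP : N ⊂ univ) {α β γ : V m} :
    codeMap (Δ L) (Δ M) (Δ N)ᶜ (α, β, γ) = 0 ↔ α ∈ Δ Lᶜ ∧ β = 0 ∧ γ ∈ Δ Mᶜ := by
  rw [← wtv_eq_zero_iff]
  constructor
  · intro h0
    by_contra hker
    by_cases hmem : α ∈ Δ Lᶜ ∧ β + γ ∈ Δ Mᶜ ∧ β ∈ Δ Nᶜ
    · have hβ : β ≠ 0 := fun hβ => hker ⟨hmem.1, hβ, by simpa [hβ] using hmem.2.1⟩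
      have := wtv_codeMap_of_mem hmem.1 hmem.2.1 hmem.2.2 hβ
      exact pow_ne_zero _ two_ne_zero (this.symm.trans h0)
    · have := two_mul_wtv_codeMap_of_notMem hmem
      have := card_codeIndex_pos (L := L) (M := M) hP
      omega
  · rintro ⟨hα, rfl, hγ⟩
    have hw := two_mul_wtv_codeMap (L := L) (M := M) (N := N) α 0 γ
    rw [if_pos hα, zero_add, if_pos hγ, if_pos rfl, if_pos (zero_mem_Δ _)] at hw
    have : (2 : ℤ) * wtv (codeMap (Δ L) (Δ M) (Δ N)ᶜ (α, 0, γ)) = 0 := by rw [hw]; ring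
    omega

lemma codeMap_eq_codeMap_diag (hP : N ⊂ univ) {α β γ : V m} (hα : α ∈ Δ Lᶜ)
    (hβγ : β + γ ∈ Δ Mᶜ) :
    codeMap (Δ L) (Δ M) (Δ N)ᶜ (α, β, γ) = codeMap (Δ L) (Δ M) (Δ N)ᶜ (0, β, β) := by
  have hsplit : ((α, β, γ) : V m × V m × V m) = (0, β, β) + (α, 0, β + γ) := by
    simp [← add_assoc, ZModModule.add_self]
  rw [hsplit, map_add, (codeMap_eq_zero_iff hP).2 ⟨hα, rfl, hβγ⟩, add_zero]

lemma wtv_codeMap_diag {β : V m} (hβ : β ∈ (Δ Nᶜ).erase 0) :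
    wtv (codeMap (Δ L) (Δ M) (Δ N)ᶜ (0, β, β)) = 2 ^ (m + #L + #M - 1) :=
  wtv_codeMap_of_mem (zero_mem_Δ _) (by rw [ZModModule.add_self]; exact zero_mem_Δ _)
    (mem_erase.1 hβ).2 (mem_erase.1 hβ).1

lemma codeMap_diag_injective (hP : N ⊂ univ) :
    Function.Injective fun β : V m => codeMap (Δ L) (Δ M) (Δ N)ᶜ (0, β, β) := by
  intro β β' h
  have hsub : codeMap (Δ L) (Δ M) (Δ N)ᶜ (0, β - β', β - β') = 0 := by
    rw [← sub_zero (0 : V m), ← Prod.mk_sub_mk, ← Prod.mk_sub_mk, map_sub, sub_eq_zero]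
    exact h
  exact sub_eq_zero.1 ((codeMap_eq_zero_iff hP).1 hsub).2.1

theorem mem_range_codeMap_cases (hP : N ⊂ univ) {c}
    (hc : c ∈ LinearMap.range (codeMap (Δ L) (Δ M) (Δ N)ᶜ)) :
    c = 0 ∨ 2 * wtv c = (2 ^ m - 2 ^ #N) * 2 ^ (#L + #M)
      ∨ ∃ β ∈ (Δ Nᶜ).erase 0, codeMap (Δ L) (Δ M) (Δ N)ᶜ (0, β, β) = c := by
  obtain ⟨⟨α, β, γ⟩, rfl⟩ := hc
  by_cases hmem : α ∈ Δ Lᶜ ∧ β + γ ∈ Δ Mᶜ ∧ β ∈ Δ Nᶜ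
  · rw [codeMap_eq_codeMap_diag hP hmem.1 hmem.2.1]
    by_cases hβ : β = 0
    · exact Or.inl ((codeMap_eq_zero_iff hP).2 ⟨zero_mem_Δ _, hβ, hβ ▸ zero_mem_Δ _⟩)
    · exact Or.inr (Or.inr ⟨β, mem_erase.2 ⟨hβ, hmem.2.2⟩, rfl⟩)
  · exact Or.inr (Or.inl (two_mul_wtv_codeMap_of_notMem hmem))

lemma card_ker_codeMap (hP : N ⊂ univ) :
    Fintype.card (LinearMap.ker (codeMap (Δ L) (Δ M) (Δ N)ᶜ)) = 2 ^ (m - #L) * 2 ^ (m - #M) := by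
  have hker : univ.filter (· ∈ LinearMap.ker (codeMap (Δ L) (Δ M) (Δ N)ᶜ))
      = Δ Lᶜ ×ˢ ({0} ×ˢ Δ Mᶜ) := by
    ext ⟨α, β, γ⟩
    simp [codeMap_eq_zero_iff hP, eq_comm, and_comm]
  rw [Fintype.card_subtype, hker, card_product, card_product, card_singleton, card_Δ, card_Δ,
    card_compl, card_compl, Fintype.card_fin, one_mul]

theorem finrank_range_codeMap (hP : N ⊂ univ) :
    Module.finrank (ZMod 2) (LinearMap.range (codeMap (Δ L) (Δ M) (Δ N)ᶜ)) = m + #L + #M := by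
  have hker : Module.finrank (ZMod 2) (LinearMap.ker (codeMap (Δ L) (Δ M) (Δ N)ᶜ))
      = (m - #L) + (m - #M) := by
    apply Nat.pow_right_injective le_rfl
    have hcard := Module.card_eq_pow_finrank (K := ZMod 2)
      (V := LinearMap.ker (codeMap (Δ L) (Δ M) (Δ N)ᶜ))
    rw [ZMod.card, card_ker_codeMap hP] at hcard
    simp only [← hcard, pow_add]
  have hrank := LinearMap.finrank_range_add_finrank_ker (codeMap (Δ L) (Δ M) (Δ N)ᶜ)
  rw [hker, Module.finrank_prod, Module.finrank_prod, Module.finrank_fin_fun] at hrank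
  have := card_le_dim L
  have := card_le_dim M
  omega

lemma card_range_codeMap (hP : N ⊂ univ) :
    #(univ.filter (· ∈ LinearMap.range (codeMap (Δ L) (Δ M) (Δ N)ᶜ))) = 2 ^ (m + #L + #M) := by
  rw [← Fintype.card_subtype, Module.card_eq_pow_finrank (K := ZMod 2), ZMod.card,
    finrank_range_codeMap hP]

lemma exists_two_mul_wtv_eq (hne : L ≠ ∅ ∨ M ≠ ∅ ∨ N ≠ ∅) :
    ∃ c ∈ LinearMap.range (codeMap (Δ L) (Δ M) (Δ N)ᶜ),
      2 * wtv c = (2 ^ m - 2 ^ #N) * 2 ^ (#L + #M) := by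
  suffices ∃ α β γ : V m, ¬(α ∈ Δ Lᶜ ∧ β + γ ∈ Δ Mᶜ ∧ β ∈ Δ Nᶜ) from
    let ⟨α, β, γ, h⟩ := this
    ⟨_, LinearMap.mem_range_self _ (α, β, γ), two_mul_wtv_codeMap_of_notMem h⟩
  simp only [← nonempty_iff_ne_empty] at hne
  rcases hne with ⟨i, hi⟩ | ⟨i, hi⟩ | ⟨i, hi⟩
  · exact ⟨Pi.single i 1, 0, 0, fun h => single_notMem_Δ_compl hi h.1⟩
  · exact ⟨0, 0, Pi.single i 1, fun h => single_notMem_Δ_compl hi (by simpa using h.2.1)⟩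
  · exact ⟨0, Pi.single i 1, 0, fun h => single_notMem_Δ_compl hi h.2.2⟩

lemma codeLength_lt (hP : N ⊂ univ) :
    (2 ^ m - 2 ^ #N) * 2 ^ (#L + #M) < 2 * 2 ^ (m + #L + #M - 1) := by
  have hN := card_lt_dim hP
  rw [← pow_succ', Nat.sub_add_cancel (by omega), add_assoc, pow_add _ m]
  exact Nat.mul_lt_mul_of_pos_right (Nat.sub_lt (by positivity) (by positivity)) (by positivity)

theorem isLeast_wtv_codeMap (hP : N ⊂ univ) (hne : L ≠ ∅ ∨ M ≠ ∅ ∨ N ≠ ∅) :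
    IsLeast {w : ℕ | ∃ c ∈ LinearMap.range (codeMap (Δ L) (Δ M) (Δ N)ᶜ), c ≠ 0 ∧ wtv c = w}
      ((2 ^ m - 2 ^ #N) * 2 ^ (#L + #M) / 2) := by
  obtain ⟨c₁, hc₁, hw₁⟩ := exists_two_mul_wtv_eq hne
  have hpos := card_codeIndex_pos (L := L) (M := M) hP
  refine ⟨⟨c₁, hc₁, fun h => ?_, by omega⟩, ?_⟩
  · rw [wtv_eq_zero_iff.2 h] at hw₁
    omega
  · rintro w ⟨c, hc, hc0, rfl⟩
    rcases mem_range_codeMap_cases hP hc with h | h | ⟨β, hβ, rfl⟩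
    · exact absurd h hc0
    · omega
    · have := codeLength_lt (L := L) (M := M) hP
      rw [wtv_codeMap_diag hβ]
      omega

theorem weightEnumerator_codeMap (hP : N ⊂ univ) (hne : L ≠ ∅ ∨ M ≠ ∅ ∨ N ≠ ∅) :
    ∑ c ∈ univ.filter (· ∈ LinearMap.range (codeMap (Δ L) (Δ M) (Δ N)ᶜ)), (X : ℤ[X]) ^ wtv c
      = 1 + C ((2 : ℤ) ^ (m + #L + #M) - 2 ^ (m - #N))
            * X ^ ((2 ^ m - 2 ^ #N) * 2 ^ (#L + #M) / 2)
          + C ((2 : ℤ) ^ (m - #N) - 1) * X ^ (2 ^ (m + #L + #M - 1)) := by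
  set R := univ.filter (· ∈ LinearMap.range (codeMap (Δ L) (Δ M) (Δ N)ᶜ))
  set w₁ := (2 ^ m - 2 ^ #N) * 2 ^ (#L + #M) / 2
  set w₂ := 2 ^ (m + #L + #M - 1)
  obtain ⟨c₁, -, hw₁⟩ := exists_two_mul_wtv_eq hne
  have hpos := card_codeIndex_pos (L := L) (M := M) hP
  have hlt := codeLength_lt (L := L) (M := M) hP
  have hweights : ∀ c ∈ R, wtv c = 0 ∨ wtv c = w₁ ∨ wtv c = w₂ := by
    intro c hc
    rcases mem_range_codeMap_cases hP (mem_filter.1 hc).2 with rfl | h | ⟨β, hβ, rfl⟩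
    · exact Or.inl (wtv_eq_zero_iff.2 rfl)
    · exact Or.inr (Or.inl (by omega))
    · exact Or.inr (Or.inr (wtv_codeMap_diag hβ))
  have h01 : 0 ≠ w₁ := by omega
  have h02 : 0 ≠ w₂ := by omega
  have h12 : w₁ ≠ w₂ := by omega
  have hcard₀ : #{c ∈ R | wtv c = 0} = 1 := by
    rw [card_eq_one]
    refine ⟨0, ext fun c => ?_⟩
    simp only [R, mem_filter, mem_univ, true_and, mem_singleton, wtv_eq_zero_iff]
    exact ⟨And.right, fun h => ⟨h ▸ Submodule.zero_mem _, h⟩⟩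
  have hcard₂ : #{c ∈ R | wtv c = w₂} = 2 ^ (m - #N) - 1 := by
    have himage : {c ∈ R | wtv c = w₂}
        = ((Δ Nᶜ).erase 0).image fun β => codeMap (Δ L) (Δ M) (Δ N)ᶜ (0, β, β) := by
      ext c
      simp only [R, mem_filter, mem_univ, true_and, mem_image]
      constructor
      · rintro ⟨hc, hw⟩
        rcases mem_range_codeMap_cases hP hc with rfl | h | h
        · rw [wtv_eq_zero_iff.2 rfl] at hw; omega
        · omega
        · exact h
      · rintro ⟨β, hβ, rfl⟩
        exact ⟨LinearMap.mem_range_self _ _, wtv_codeMap_diag hβ⟩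
    rw [himage, card_image_of_injective _ (codeMap_diag_injective hP),
      card_erase_of_mem (zero_mem_Δ _), card_Δ, card_compl, Fintype.card_fin]
  have hcard₁ : #{c ∈ R | wtv c = w₁} = 2 ^ (m + #L + #M) - 2 ^ (m - #N) := by
    -- the case `x = 1` counts the codewords
    have htotal := sum_pow_of_three_values R wtv (1 : ℕ) h01 h02 h12 hweights
    have hR : #R = 2 ^ (m + #L + #M) := card_range_codeMap hP
    simp only [one_pow, sum_const, smul_eq_mul, mul_one, hR, hcard₀, hcard₂] at htotal
    have : 1 ≤ 2 ^ (m - #N) := Nat.one_le_two_pow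
    omega
  have hle : 2 ^ (m - #N) ≤ 2 ^ (m + #L + #M) := Nat.pow_le_pow_right two_pos (by omega)
  rw [sum_pow_of_three_values R wtv X h01 h02 h12 hweights, hcard₀, hcard₁, hcard₂]
  simp only [nsmul_eq_mul, ← C_eq_natCast, pow_zero, one_smul]
  push_cast [hle, Nat.one_le_two_pow]
  ring

theorem griesmer_codeMap (hne : L ≠ ∅ ∨ M ≠ ∅ ∨ N ≠ ∅) :
    ∑ i ∈ range (m + #L + #M), ⌈((2 ^ m - 2 ^ #N) * 2 ^ (#L + #M) / 2 : ℚ) / 2 ^ i⌉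
      = ((2 ^ m - 2 ^ #N) * 2 ^ (#L + #M) : ℤ) := by
  have hNLM : 0 < #N + #L + #M := by
    simp only [← nonempty_iff_ne_empty, ← card_pos] at hne
    omega
  obtain ⟨s, hs⟩ := Nat.exists_eq_add_one.2 hNLM
  obtain ⟨t, ht⟩ := Nat.exists_eq_add_of_le (card_le_dim N)
  have hpow {K : Type} [CommRing K] :
      ((2 : K) ^ m - 2 ^ #N) * 2 ^ (#L + #M) = 2 ^ (s + 1) * (2 ^ t - 1) := by
    rw [← hs, show (2 : K) ^ m = 2 ^ #N * 2 ^ t by rw [← pow_add, ← ht]]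
    ring
  rw [hpow, pow_succ, mul_div_right_comm, mul_div_cancel_right₀ _ two_ne_zero,
    show m + #L + #M = s + 1 + t by omega, sum_ceil_div_two_pow, hpow]

end Code

theorem stmt8_general (m : ℕ) (L M N : Finset (Fin m))
    (hP : N ⊂ Finset.univ) (hne : L ≠ ∅ ∨ M ≠ ∅ ∨ N ≠ ∅) :
    (Fintype.card ({x // x ∈ (Δ L)} × {x // x ∈ (Δ M)} × {x // x ∈ (Δ N)ᶜ}) = (2 ^ m - 2 ^ N.card) * 2 ^ (L.card + M.card)) ∧
    (Module.finrank (ZMod 2) ↥(LinearMap.range (codeMap (Δ L) (Δ M) (Δ N)ᶜ)) = m + L.card + M.card) ∧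
    IsLeast {w : ℕ | ∃ c ∈ LinearMap.range (codeMap (Δ L) (Δ M) (Δ N)ᶜ), c ≠ 0 ∧ wtv c = w}
      (((2 ^ m - 2 ^ N.card) * 2 ^ (L.card + M.card)) / 2) ∧
    ((∑ c ∈ Finset.univ.filter (fun c => c ∈ LinearMap.range (codeMap (Δ L) (Δ M) (Δ N)ᶜ)),
        (X : ℤ[X]) ^ wtv c)
      = 1 + Polynomial.C ((2 : ℤ) ^ (m + L.card + M.card) - 2 ^ (m - N.card)) * X ^ (((2 ^ m - 2 ^ N.card) * 2 ^ (L.card + M.card)) / 2)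
          + Polynomial.C ((2 : ℤ) ^ (m - N.card) - 1) * X ^ (2 ^ (m + L.card + M.card - 1))) ∧
    (∑ i ∈ Finset.range (m + L.card + M.card), ⌈((((2 ^ m - 2 ^ N.card) * 2 ^ (L.card + M.card)) / 2 : ℚ)) / 2 ^ i⌉ = ((2 ^ m - 2 ^ N.card) * 2 ^ (L.card + M.card) : ℤ)) :=
  ⟨card_codeIndex, finrank_range_codeMap hP, isLeast_wtv_codeMap hP hne,
    weightEnumerator_codeMap hP hne, griesmer_codeMap hne⟩

/-- Theorem 4.1(4): the code `C((Δ L), (Δ M), (Δ N)ᶜ)` is a two-weight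
binary `[(2^m − 2^{|N|})·2^{|L|}+|M|}, m+|L|+|M|]` Griesmer code with the stated
weight distribution. -/
theorem stmt8 (m : ℕ) (hm : 1 ≤ m) (L M N : Finset (Fin m))
    (hP : N ⊂ Finset.univ) (hne : L ≠ ∅ ∨ M ≠ ∅ ∨ N ≠ ∅) :
    (Fintype.card ({x // x ∈ (Δ L)} × {x // x ∈ (Δ M)} × {x // x ∈ (Δ N)ᶜ}) = (2 ^ m - 2 ^ N.card) * 2 ^ (L.card + M.card)) ∧
    (Module.finrank (ZMod 2) ↥(LinearMap.range (codeMap (Δ L) (Δ M) (Δ N)ᶜ)) = m + L.card + M.card) ∧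
    IsLeast {w : ℕ | ∃ c ∈ LinearMap.range (codeMap (Δ L) (Δ M) (Δ N)ᶜ), c ≠ 0 ∧ wtv c = w}
      (((2 ^ m - 2 ^ N.card) * 2 ^ (L.card + M.card)) / 2) ∧
    ((∑ c ∈ Finset.univ.filter (fun c => c ∈ LinearMap.range (codeMap (Δ L) (Δ M) (Δ N)ᶜ)),
        (X : ℤ[X]) ^ wtv c)
      = 1 + Polynomial.C ((2 : ℤ) ^ (m + L.card + M.card) - 2 ^ (m - N.card)) * X ^ (((2 ^ m - 2 ^ N.card) * 2 ^ (L.card + M.card)) / 2)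
          + Polynomial.C ((2 : ℤ) ^ (m - N.card) - 1) * X ^ (2 ^ (m + L.card + M.card - 1))) ∧
    (∑ i ∈ Finset.range (m + L.card + M.card), ⌈((((2 ^ m - 2 ^ N.card) * 2 ^ (L.card + M.card)) / 2 : ℚ)) / 2 ^ i⌉ = ((2 ^ m - 2 ^ N.card) * 2 ^ (L.card + M.card) : ℤ)) :=
  stmt8_general m L M N hP hne
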